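/- arXiv:math/0509135 — 3 statements merged into one kernel-verified Lean document; each statement's English description precedes it below -/
import Mathlib

section
/- Define Ψ_m ∈ NSym (m ≥ 1) by the equation dσ(t)/dt = σ(t)ψ(t), where ψ(t) = ∑_{m≥1} t^{m-1} Ψ_m and σ(t) = ∑_{m≥0} t^m S_m with σ(t)λ(-t) = 1. Then for each m ≥ 1, S_m = ∑_{I ∈ C_m} (1/π_u(I)) Ψ^I, where for I = (i_1,...,i_k), π_u(I) = ∏_{j=1}^k (i_1 + ... + i_j). -/
/-!
Comparing coefficients of `t ^ n` in `σ' = σ ψ` gives `(n + 1) S_{n+1} = ∑_{i+j=n} S_i Ψ_{j+1}`,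
which together with `S_0 = 1` determines `S`. The composition sum satisfies the same recursion:
removing the last part `j + 1` of a composition `I` of `n + 1` leaves a composition `I'` of `n - j`,
and `π_u(I) = π_u(I') (n + 1)` since the last partial sum of `I` is `n + 1`.
-/

noncomputable abbrev NSym : Type := FreeAlgebra ℚ ℕ

noncomputable def Lam : ℕ → NSym := fun m => if m = 0 then 1 else FreeAlgebra.ι ℚ m

def piu (l : List ℕ) : ℕ :=
  ((List.range l.length).map fun j => (l.take (j + 1)).sum).prod

lemma piu_nil : piu [] = 1 := rfl

lemma piu_append_singleton (l : List ℕ) (a : ℕ) : piu (l ++ [a]) = piu l * (l.sum + a) := by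
  unfold piu
  rw [List.length_append, List.length_singleton, List.range_succ, List.map_append,
    List.prod_append, List.map_singleton, List.prod_singleton, List.take_of_length_le (by simp),
    List.sum_append, List.sum_singleton]
  congr 2
  refine List.map_congr_left fun j hj => ?_
  rw [List.take_append_of_le_length (by simp at hj; omega)]

lemma List.sum_dropLast_add_getLast {M : Type*} [AddMonoid M] (l : List M) (h : l ≠ []) :
    l.dropLast.sum + l.getLast h = l.sum := by
  conv_rhs => rw [← List.dropLast_append_getLast h]
  rw [List.sum_append, List.sum_singleton]

namespace Composition

lemma eq_ones_zero (c : Composition 0) : c = ones 0 :=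
  Composition.ext (by simp)

lemma sigma_ext {α : Type*} {f : α → ℕ} {p q : Σ a, Composition (f a)} (h₁ : p.1 = q.1)
    (h₂ : p.2.blocks = q.2.blocks) : p = q := by
  obtain ⟨a, c⟩ := p
  obtain ⟨b, d⟩ := q
  obtain rfl : a = b := h₁
  obtain rfl : c = d := Composition.ext h₂
  rfl

/-- A composition of `n + 1` is `c ++ [j + 1]` for a unique `j` and composition `c` of `n - j`. -/
def sigmaEquivSucc (n : ℕ) : (Σ j : Fin (n + 1), Composition (n - j)) ≃ Composition (n + 1) where
  toFun p :=
    { blocks := p.2.blocks ++ [(p.1 : ℕ) + 1]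
      blocks_pos := by
        simp only [List.mem_append, List.mem_singleton]
        rintro i (hi | rfl)
        exacts [p.2.blocks_pos hi, Nat.succ_pos _]
      blocks_sum := by
        rw [List.sum_append, p.2.blocks_sum, List.sum_singleton]
        omega }
  invFun c :=
    have hc : c.blocks ≠ [] := by simp
    have hlast := c.one_le_blocks (List.getLast_mem hc)
    have hsum := (c.blocks.sum_dropLast_add_getLast hc).trans c.blocks_sum
    ⟨⟨c.blocks.getLast hc - 1, by omega⟩,
      { blocks := c.blocks.dropLast
        blocks_pos := fun hi => c.blocks_pos (List.dropLast_subset _ hi)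
        blocks_sum := by simp only; omega }⟩
  left_inv p := sigma_ext (Fin.ext (by simp)) List.dropLast_concat
  right_inv c := by
    ext1
    simp only
    rw [Nat.sub_add_cancel (c.one_le_blocks (List.getLast_mem _)), List.dropLast_append_getLast]

lemma blocks_sigmaEquivSucc (n : ℕ) (p : Σ j : Fin (n + 1), Composition (n - j)) :
    (sigmaEquivSucc n p).blocks = p.2.blocks ++ [(p.1 : ℕ) + 1] := rfl

end Composition

open Finset

lemma Finset.Nat.sum_fin_succ_eq_sum_antidiagonal {M : Type*} [AddCommMonoid M]
    (f : ℕ → ℕ → M) (n : ℕ) :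
    ∑ j : Fin (n + 1), f (n - j) j = ∑ p ∈ antidiagonal n, f p.1 p.2 := by
  rw [← Nat.sum_antidiagonal_swap]
  simp only [Prod.fst_swap, Prod.snd_swap]
  rw [Nat.sum_antidiagonal_eq_sum_range_succ (fun i j => f j i),
    Fin.sum_univ_eq_sum_range (fun j => f (n - j) j)]

section Expansion

variable {A : Type*} [Ring A] [Algebra ℚ A]

noncomputable def psiExpansion (Ψ : ℕ → A) (n : ℕ) : A :=
  ∑ I : Composition n, ((piu I.blocks : ℚ)⁻¹) • (I.blocks.map Ψ).prod

lemma psiExpansion_zero (Ψ : ℕ → A) : psiExpansion Ψ 0 = 1 := by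
  rw [psiExpansion, Fintype.sum_eq_single _ fun c hc => (hc c.eq_ones_zero).elim]
  simp [piu_nil]

lemma succ_smul_psiExpansion_succ (Ψ : ℕ → A) (n : ℕ) :
    ((n : ℚ) + 1) • psiExpansion Ψ (n + 1) =
      ∑ p ∈ antidiagonal n, psiExpansion Ψ p.1 * Ψ (p.2 + 1) := by
  have hn : ((n : ℚ) + 1) ≠ 0 := by positivity
  have hsplit (j : Fin (n + 1)) (c : Composition (n - j)) :
      ((piu (c.blocks ++ [(j : ℕ) + 1]) : ℚ)⁻¹) • ((c.blocks ++ [(j : ℕ) + 1]).map Ψ).prod =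
        ((n : ℚ) + 1)⁻¹ • (((piu c.blocks : ℚ)⁻¹ • (c.blocks.map Ψ).prod) * Ψ (j + 1)) := by
    have hsum : c.blocks.sum + ((j : ℕ) + 1) = n + 1 := by
      rw [c.blocks_sum]; omega
    rw [piu_append_singleton, hsum, List.map_append, List.prod_append, List.map_singleton,
      List.prod_singleton, smul_mul_assoc, smul_smul]
    push_cast
    rw [mul_inv, mul_comm]
  rw [psiExpansion, ← (Composition.sigmaEquivSucc n).sum_comp, Fintype.sum_sigma]
  simp only [Composition.blocks_sigmaEquivSucc, hsplit, ← smul_sum, smul_smul,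
    mul_inv_cancel₀ hn, one_smul, ← sum_mul]
  exact Nat.sum_fin_succ_eq_sum_antidiagonal (fun i j => psiExpansion Ψ i * Ψ (j + 1)) n

theorem eq_psiExpansion_of_succ_smul {S Ψ : ℕ → A} (h₀ : S 0 = 1)
    (hrec : ∀ n : ℕ, ((n : ℚ) + 1) • S (n + 1) = ∑ p ∈ antidiagonal n, S p.1 * Ψ (p.2 + 1)) :
    S = psiExpansion Ψ := by
  funext n
  induction n using Nat.strong_induction_on with
  | _ n ih =>
    rcases n with _ | n
    · rw [h₀, psiExpansion_zero]
    · refine smul_right_injective A (r := (n : ℚ) + 1) (by positivity) ?_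
      simp only [hrec, succ_smul_psiExpansion_succ]
      refine sum_congr rfl fun p hp => ?_
      rw [ih p.1 (Nat.antidiagonal.fst_lt hp)]

end Expansion

/-- let `σ(t) = ∑ t^m S_m` satisfy `σ(t)λ(-t) = 1` and let
`ψ(t) = ∑_{m≥1} t^{m-1} Ψ_m` be defined by `dσ(t)/dt = σ(t)ψ(t)`. Then for each `m ≥ 1`,
`S_m = ∑_{I ∈ C_m} (1/π_u(I)) Ψ^I`. -/
theorem stmt6 (S : ℕ → NSym) (Psi : ℕ → NSym)
    (hS : PowerSeries.mk S * (PowerSeries.mk fun n => (-1 : NSym) ^ n * Lam n) = 1)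
    (hPsi : ∀ k : ℕ,
      ((k : ℚ) + 1) • PowerSeries.coeff (R := NSym) (k + 1) (PowerSeries.mk S)
        = PowerSeries.coeff (R := NSym) k
            (PowerSeries.mk S * PowerSeries.mk fun j => Psi (j + 1))) :
    ∀ m : ℕ, 1 ≤ m →
      S m = ∑ I : Composition m,
        ((piu I.blocks : ℚ)⁻¹) • (I.blocks.map Psi).prod := by
  have hS₀ : S 0 = 1 := by simpa [Lam] using congrArg (PowerSeries.coeff 0) hS
  have hrec (n : ℕ) :
      ((n : ℚ) + 1) • S (n + 1) = ∑ p ∈ antidiagonal n, S p.1 * Psi (p.2 + 1) := by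
    simpa only [PowerSeries.coeff_mk, PowerSeries.coeff_mul] using hPsi n
  intro m _
  rw [eq_psiExpansion_of_succ_smul hS₀ hrec, psiExpansion]
end

section
/- For any composition I and a formal variable u, the identity ∑_{J: I ⪰ J} ((-1)^{ℓ(J)} u^{ℓ(J)}) / (ℓ(J)! · ℓ(I, J)) = (-1)^{ℓ(I)} · C(u, ℓ(I)) holds in Q[u], where the sum runs over compositions J coarser than I (i.e., I refines J), ℓ(I,J) = ∏_a ℓ(I_a) with I_a the blocks of I relative to J, and C(u,k) is the binomial coefficient polynomial. -/
/-!
As power series in `t`, `∑ₙ compositionPoly n tⁿ = exp (-u ∑_{a ≥ 1} tᵃ / a) = (1 - t)ᵘ`, whose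
coefficients are `(-1)ⁿ C(u, n)`. Instead of power series we use the coefficient form of
`∂ᵤ F = log (1 - t) F`: differentiating in `u` and splitting off the first block of a composition,
both sides satisfy `P (n + 1)' = -∑_{a + b = n} P b / (a + 1)`, and both vanish at `u = 0` for
`n ≥ 1`, which determines them.
-/

open Polynomial

/-- The polynomial binomial coefficient `C(u, m) = u(u-1)⋯(u-m+1)/m!` over `ℚ`. -/
noncomputable def binPoly (m : ℕ) : Polynomial ℚ :=
  ((m.factorial : ℚ)⁻¹) • descPochhammer ℚ m

open Finset

theorem Polynomial.eq_of_derivative_succ_eq_sum_antidiagonal {R : Type*} [Ring R]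
    [IsAddTorsionFree R] (k : ℕ → R) {P Q : ℕ → R[X]} (h₀ : P 0 = Q 0)
    (hcoeff : ∀ n, (P (n + 1)).coeff 0 = (Q (n + 1)).coeff 0)
    (hP : ∀ n, derivative (P (n + 1)) = ∑ p ∈ antidiagonal n, k p.1 • P p.2)
    (hQ : ∀ n, derivative (Q (n + 1)) = ∑ p ∈ antidiagonal n, k p.1 • Q p.2) :
    P = Q := by
  funext n
  induction n using Nat.strong_induction_on with
  | _ n ih =>
    rcases n with _ | n
    · exact h₀
    have hderiv : derivative (P (n + 1) - Q (n + 1)) = 0 := by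
      rw [derivative_sub, hP, hQ, sub_eq_zero]
      refine sum_congr rfl fun p hp => ?_
      rw [ih p.2 (by have := mem_antidiagonal.1 hp; omega)]
    rw [← sub_eq_zero, eq_C_of_derivative_eq_zero hderiv, coeff_sub, hcoeff, sub_self, map_zero]

namespace Composition

def consEquiv (n : ℕ) : (Σ a : Fin (n + 1), Composition (n - a)) ≃ Composition (n + 1) where
  toFun p := ⟨(p.1 + 1 : ℕ) :: p.2.blocks,
    fun hi => (List.mem_cons.1 hi).elim (· ▸ Nat.succ_pos _) p.2.blocks_pos,
    by rw [List.sum_cons, p.2.blocks_sum]; omega⟩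
  invFun c :=
    have hne : c.blocks ≠ [] := c.blocks_eq_nil.not.2 n.succ_ne_zero
    have hsum : c.blocks.head hne + c.blocks.tail.sum = n + 1 := by
      rw [← List.sum_cons, List.cons_head_tail, c.blocks_sum]
    have hpos : 0 < c.blocks.head hne := c.blocks_pos (List.head_mem hne)
    ⟨⟨c.blocks.head hne - 1, by omega⟩,
      ⟨c.blocks.tail, fun hi => c.blocks_pos (List.mem_of_mem_tail hi), by simp only; omega⟩⟩
  left_inv _ := by simp
  right_inv c := by
    have hne : c.blocks ≠ [] := c.blocks_eq_nil.not.2 n.succ_ne_zero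
    have hpos : 0 < c.blocks.head hne := c.blocks_pos (List.head_mem hne)
    ext1
    simp only [Nat.sub_add_cancel hpos, List.cons_head_tail]

@[simp]
lemma blocks_consEquiv {n : ℕ} (p : Σ a : Fin (n + 1), Composition (n - a)) :
    (consEquiv n p).blocks = (p.1 + 1 : ℕ) :: p.2.blocks :=
  rfl

@[simp]
lemma length_consEquiv {n : ℕ} (p : Σ a : Fin (n + 1), Composition (n - a)) :
    (consEquiv n p).length = p.2.length + 1 := by
  simp [length]

lemma sum_succ {M : Type*} [AddCommMonoid M] (n : ℕ) (f : Composition (n + 1) → M) :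
    ∑ c, f c = ∑ a : Fin (n + 1), ∑ c : Composition (n - a), f (consEquiv n ⟨a, c⟩) := by
  rw [← (consEquiv n).sum_comp, Fintype.sum_sigma]

noncomputable def signedWeight {n : ℕ} (c : Composition n) : ℚ :=
  (-1) ^ c.length / (c.length.factorial * c.blocks.prod)

lemma signedWeight_consEquiv {n : ℕ} (a : Fin (n + 1)) (c : Composition (n - a)) :
    (c.length + 1 : ℚ) * (consEquiv n ⟨a, c⟩).signedWeight = -1 / (a + 1) * c.signedWeight := by
  have hprod : (c.blocks.prod : ℚ) ≠ 0 := by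
    exact_mod_cast (List.prod_pos fun _ h => c.blocks_pos h).ne'
  simp only [signedWeight, length_consEquiv, blocks_consEquiv, List.prod_cons,
    Nat.factorial_succ]
  push_cast
  field_simp
  ring

end Composition

noncomputable def compositionPoly (n : ℕ) : ℚ[X] :=
  ∑ c : Composition n, c.signedWeight • (X ^ c.length : ℚ[X])

lemma compositionPoly_zero : compositionPoly 0 = 1 := by
  have hc : ∀ c : Composition 0, c.signedWeight • (X ^ c.length : ℚ[X]) = 1 := fun c => by
    simp [Composition.signedWeight, (c.length_eq_zero).2 rfl, (c.blocks_eq_nil).2 rfl]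
  simp [compositionPoly, hc, composition_card]

lemma coeff_compositionPoly_succ_zero (n : ℕ) : (compositionPoly (n + 1)).coeff 0 = 0 := by
  refine (finsetSum_coeff _ _ _).trans (sum_eq_zero fun c _ => ?_)
  simp [coeff_X_pow, (c.length_pos_iff.2 n.succ_pos).ne]

lemma derivative_compositionPoly_succ (n : ℕ) :
    derivative (compositionPoly (n + 1)) =
      ∑ p ∈ antidiagonal n, (-1 / (p.1 + 1 : ℚ)) • compositionPoly p.2 := by
  rw [Nat.sum_antidiagonal_eq_sum_range_succ (fun i j => (-1 / (i + 1 : ℚ)) • compositionPoly j),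
    ← Fin.sum_univ_eq_sum_range (fun i => (-1 / (i + 1 : ℚ)) • compositionPoly (n - i)),
    compositionPoly, Composition.sum_succ, derivative_sum]
  refine sum_congr rfl fun a _ => ?_
  rw [compositionPoly, smul_sum, derivative_sum]
  refine sum_congr rfl fun c _ => ?_
  rw [derivative_smul, Composition.length_consEquiv, derivative_X_pow, Nat.add_sub_cancel,
    ← smul_eq_C_mul, smul_smul, smul_smul, mul_comm, Nat.cast_add_one,
    Composition.signedWeight_consEquiv]

lemma natCast_add_one_smul_binPoly_succ (n : ℕ) :
    ((n : ℚ) + 1) • binPoly (n + 1) = binPoly n * (X - (n : ℚ[X])) := by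
  rw [binPoly, binPoly, descPochhammer_succ_right, smul_smul, smul_mul_assoc, Nat.factorial_succ]
  congr 1
  push_cast
  field_simp

lemma natCast_add_one_smul_derivative_binPoly_succ (n : ℕ) :
    ((n : ℚ) + 1) • derivative (binPoly (n + 1)) =
      derivative (binPoly n) * (X - (n : ℚ[X])) + binPoly n := by
  rw [← derivative_smul, natCast_add_one_smul_binPoly_succ, derivative_mul, derivative_sub,
    derivative_X, derivative_natCast, sub_zero, mul_one]

lemma natCast_add_two_smul_sum_antidiagonal_succ (n : ℕ) :
    ((n : ℚ) + 2) • ∑ p ∈ antidiagonal (n + 1), ((-1 : ℚ) ^ p.1 / (p.1 + 1)) • binPoly p.2 =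
      (∑ p ∈ antidiagonal n, ((-1 : ℚ) ^ p.1 / (p.1 + 1)) • binPoly p.2) *
          (X - ((n + 1 : ℕ) : ℚ[X])) + binPoly (n + 1) := by
  set S₁ := ∑ p ∈ antidiagonal n, (-1 : ℚ) ^ p.1 • binPoly p.2
  set S₂ :=
    ∑ p ∈ antidiagonal n, ((-1 : ℚ) ^ p.1 / (p.1 + 1)) • (binPoly p.2 * (X - (p.2 : ℚ[X])))
  have hsplit :
      ((n : ℚ) + 2) • ∑ p ∈ antidiagonal (n + 1), ((-1 : ℚ) ^ p.1 / (p.1 + 1)) • binPoly p.2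
      = ∑ p ∈ antidiagonal (n + 1), (-1 : ℚ) ^ p.1 • binPoly p.2
        + ∑ p ∈ antidiagonal (n + 1), ((-1 : ℚ) ^ p.1 / (p.1 + 1) * p.2) • binPoly p.2 := by
    rw [smul_sum, ← sum_add_distrib]
    refine sum_congr rfl fun p hp => ?_
    rw [smul_smul, ← add_smul]
    congr 1
    have : (p.1 : ℚ) + p.2 = n + 1 := by exact_mod_cast mem_antidiagonal.1 hp
    field_simp
    linarith
  have hfirst :
      ∑ p ∈ antidiagonal (n + 1), (-1 : ℚ) ^ p.1 • binPoly p.2 = binPoly (n + 1) - S₁ := by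
    rw [Nat.sum_antidiagonal_succ, pow_zero, one_smul, sub_eq_add_neg, ← sum_neg_distrib]
    simp only [pow_succ, mul_neg_one, neg_smul]
  have hsecond : ∑ p ∈ antidiagonal (n + 1), ((-1 : ℚ) ^ p.1 / (p.1 + 1) * p.2) • binPoly p.2
      = S₂ := by
    rw [Nat.sum_antidiagonal_succ', Nat.cast_zero, mul_zero, zero_smul, zero_add]
    refine sum_congr rfl fun p _ => ?_
    rw [mul_smul, Nat.cast_add_one, natCast_add_one_smul_binPoly_succ, ← smul_mul_assoc]
  have hrhs : (∑ p ∈ antidiagonal n, ((-1 : ℚ) ^ p.1 / (p.1 + 1)) • binPoly p.2) *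
      (X - ((n + 1 : ℕ) : ℚ[X])) = S₂ - S₁ := by
    rw [sum_mul, ← sum_sub_distrib]
    refine sum_congr rfl fun p hp => ?_
    obtain rfl := mem_antidiagonal.1 hp
    have hcancel : C ((-1 : ℚ) ^ p.1 / (p.1 + 1)) * ((p.1 : ℚ[X]) + 1) = C ((-1 : ℚ) ^ p.1) := by
      rw [← C_eq_natCast, ← C_1, ← C_add, ← C_mul, div_mul_cancel₀ _ (by positivity)]
    simp only [smul_eq_C_mul]
    push_cast
    linear_combination (-binPoly p.2) * hcancel
  rw [hsplit, hfirst, hsecond, hrhs]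
  abel

lemma derivative_binPoly_succ (n : ℕ) :
    derivative (binPoly (n + 1)) =
      ∑ p ∈ antidiagonal n, ((-1 : ℚ) ^ p.1 / (p.1 + 1)) • binPoly p.2 := by
  induction n with
  | zero => simp [binPoly]
  | succ n ih =>
    rw [← smul_right_inj (show (n : ℚ) + 2 ≠ 0 by positivity),
      natCast_add_two_smul_sum_antidiagonal_succ, ← ih,
      ← natCast_add_one_smul_derivative_binPoly_succ]
    push_cast
    ring_nf

lemma derivative_neg_one_pow_smul_binPoly_succ (n : ℕ) :
    derivative ((-1 : ℚ) ^ (n + 1) • binPoly (n + 1)) =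
      ∑ p ∈ antidiagonal n, (-1 / (p.1 + 1 : ℚ)) • ((-1 : ℚ) ^ p.2 • binPoly p.2) := by
  rw [derivative_smul, derivative_binPoly_succ, smul_sum]
  refine sum_congr rfl fun p hp => ?_
  obtain rfl := mem_antidiagonal.1 hp
  rw [smul_smul, smul_smul]
  congr 1
  have hsq : (-1 : ℚ) ^ p.1 * (-1) ^ p.1 = 1 := by rw [← mul_pow]; norm_num
  linear_combination (-(-1 : ℚ) ^ p.2 / (p.1 + 1)) * hsq

lemma coeff_binPoly_succ_zero (n : ℕ) : (binPoly (n + 1)).coeff 0 = 0 := by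
  simp [binPoly, coeff_zero_eq_eval_zero]

theorem compositionPoly_eq_neg_one_pow_smul_binPoly (n : ℕ) :
    compositionPoly n = (-1 : ℚ) ^ n • binPoly n := by
  revert n
  refine congrFun (eq_of_derivative_succ_eq_sum_antidiagonal (fun i => -1 / (i + 1 : ℚ)) ?_ ?_
    derivative_compositionPoly_succ derivative_neg_one_pow_smul_binPoly_succ)
  · simp [compositionPoly_zero, binPoly]
  · intro n
    rw [coeff_compositionPoly_succ_zero, coeff_smul, coeff_binPoly_succ_zero, smul_zero]

/-- The compositions `J` coarser than `I` are indexed by the compositions `c` of `ℓ(I)` (grouping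
consecutive parts of `I`); then `ℓ(J) = ℓ(c)` and `ℓ(I,J) = ∏_a ℓ(I_a)` is the product of the
parts of `c`. -/
theorem stmt10 (m : ℕ) (I : Composition m) :
    ∑ c : Composition I.length,
        (((-1 : ℚ) ^ c.length / ((c.length.factorial : ℚ) * (c.blocks.prod : ℚ))) •
          (X ^ c.length : Polynomial ℚ))
      = ((-1 : ℚ) ^ I.length) • binPoly I.length :=
  compositionPoly_eq_neg_one_pow_smul_binPoly I.length
end

section
/- Equivalently stated as a pure identity of compositions: for any compositions I, K with K ⪰ I, (-1)^{ℓ(K)} ∑_{K ⪰ J ⪰ I} (-1)^{ℓ(J)} fp(J,I)/π_u(K,J) = (-1)^{ℓ(I)} ∑_{K̄ ⪰ J ⪰ Ī} (-1)^{ℓ(J)} fp(J,Ī)/π_u(K̄,J), where sums run over intermediate refinements J. -/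
/-- The sum `∑_{K ⪰ J ⪰ I} (-1)^{ℓ(J)} fp(J,I)/π_u(K,J)`, where the refinement
`K ⪰ I` is encoded by its block decomposition `L` (so `K = L.flatten` and
`I = L.map sum`), and the intermediate `J` are indexed by choices of a composition of
the length of each block of `L`. -/
noncomputable def midSum (L : List (List ℕ)) : ℚ :=
  ∑ g : (a : Fin L.length) → Composition (L.get a).length,
    ((-1 : ℚ) ^ (∑ a, (g a).length)) *
      (∏ a, ((((L.get a).splitWrtComposition (g a)).map List.sum).headI : ℚ)) /
      (∏ a, ((((L.get a).splitWrtComposition (g a)).map piu).prod : ℚ))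

/-!
Both sides factor over the blocks of `L`, so it suffices to compare one block
`l = (i₁, …, iₙ)` with its reversal. Split the coarsenings `J` of `l` according to their first
block and sum out the rest with the closed form `∑_J (-1)^{ℓ(J)} / π_u(l, J) = (-1)ⁿ / π_u(l̄)`,
which follows from an alternating partial-fraction identity. The first-part factor cancels the
last factor of `π_u` of the first block, and the one-block sum becomes
`∑_j (-1)^{n-j} / (π_u(i₁, …, i_j) · π_u(iₙ, …, i_{j+2}))`, which is visibly symmetric under
reversal up to the sign `(-1)^{n+1}`.
-/

open Finset

lemma neg_one_pow_sub_eq_mul {K : Type*} [DivisionRing K] {m n : ℕ} (h : n ≤ m) :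
    (-1 : K) ^ (m - n) = (-1) ^ m * (-1) ^ n := by
  rw [pow_sub₀ _ (by norm_num) h, ← inv_pow, inv_neg_one]

lemma prod_map_pow_length {M α : Type*} [Monoid M] (a : M) (L : List (List α)) :
    (L.map fun B => a ^ B.length).prod = a ^ L.flatten.length := by
  induction L with
  | nil => simp
  | cons B L ih => simp [ih, pow_add]

def piuAt : ℚ → List ℕ → ℚ
  | _, [] => 1
  | u, x :: l => (u + x) * piuAt (u + x) l

@[simp] lemma piuAt_nil (u : ℚ) : piuAt u [] = 1 := rfl

@[simp] lemma piuAt_cons (u : ℚ) (x : ℕ) (l : List ℕ) :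
    piuAt u (x :: l) = (u + x) * piuAt (u + x) l := rfl

lemma piuAt_pos {u : ℚ} (hu : 0 ≤ u) {l : List ℕ} (hl : ∀ x ∈ l, 0 < x) : 0 < piuAt u l := by
  induction l generalizing u with
  | nil => exact one_pos
  | cons x l ih =>
    have hx : (0 : ℚ) < u + x := add_pos_of_nonneg_of_pos hu (by exact_mod_cast hl x (by simp))
    exact mul_pos hx (ih hx.le fun y hy => hl y (List.mem_cons_of_mem x hy))

lemma piuAt_append_singleton (u : ℚ) (l : List ℕ) (x : ℕ) :
    piuAt u (l ++ [x]) = piuAt u l * (u + l.sum + x) := by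
  induction l generalizing u with
  | nil => simp
  | cons y l ih =>
    simp only [List.cons_append, piuAt_cons, ih, List.sum_cons, Nat.cast_add]
    ring

lemma piuAt_zero_reverse_cons (x : ℕ) (l : List ℕ) :
    piuAt 0 (x :: l).reverse = piuAt 0 l.reverse * (l.sum + x) := by
  simp [piuAt_append_singleton]

lemma piuAt_eq_prod (u : ℚ) (l : List ℕ) :
    piuAt u l = ((List.range l.length).map fun j => u + ((l.take (j + 1)).sum : ℚ)).prod := by
  induction l generalizing u with
  | nil => simp
  | cons x l ih =>
    rw [piuAt_cons, ih, List.length_cons, List.range_succ_eq_map, List.map_cons, List.map_map,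
      List.prod_cons]
    congr 1
    refine congrArg List.prod (List.map_congr_left fun j _ => ?_)
    simp [add_assoc]

lemma cast_piu (l : List ℕ) : (piu l : ℚ) = piuAt 0 l := by
  rw [piuAt_eq_prod, piu, Nat.cast_list_prod, List.map_map]
  congr 1
  refine List.map_congr_left fun j _ => ?_
  simp [Nat.cast_list_sum]

theorem sum_neg_one_pow_div_piuAt_take_mul_piuAt_drop_reverse {l : List ℕ}
    (hl : ∀ x ∈ l, 0 < x) {u : ℚ} (hu : 0 < u) :
    ∑ j ∈ range (l.length + 1), (-1 : ℚ) ^ j / (piuAt u (l.take j) * piuAt 0 (l.drop j).reverse)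
      = u / (piuAt 0 l.reverse * (u + l.sum)) := by
  induction l generalizing u with
  | nil => simp [hu.ne']
  | cons y l ih =>
    have hl' : ∀ x ∈ l, 0 < x := fun x hx => hl x (List.mem_cons_of_mem y hx)
    have hy : (0 : ℚ) < y := by exact_mod_cast hl y (by simp)
    have hR : 0 < piuAt 0 l.reverse := piuAt_pos le_rfl (by simpa using hl')
    have hshift : ∀ j ∈ range (l.length + 1),
        (-1 : ℚ) ^ (j + 1) /
            (piuAt u ((y :: l).take (j + 1)) * piuAt 0 ((y :: l).drop (j + 1)).reverse)
          = -(u + y)⁻¹ * ((-1) ^ j / (piuAt (u + y) (l.take j) * piuAt 0 (l.drop j).reverse)) := by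
      intro j _
      simp only [List.take_succ_cons, List.drop_succ_cons, piuAt_cons, pow_succ, div_eq_mul_inv,
        mul_inv]
      ring
    rw [List.length_cons, sum_range_succ', sum_congr rfl hshift, ← mul_sum, ih hl' (add_pos hu hy)]
    simp only [pow_zero, List.take_zero, List.drop_zero, piuAt_nil, one_mul,
      piuAt_zero_reverse_cons, List.sum_cons, Nat.cast_add]
    have : (0 : ℚ) ≤ l.sum := by positivity
    field_simp
    ring

section FirstBlock

variable {α : Type*} (l : List α)

def compositionCons (p : Σ j : Fin l.length, Composition (l.drop (j + 1)).length) :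
    Composition l.length where
  blocks := ((p.1 : ℕ) + 1) :: p.2.blocks
  blocks_pos {i} hi := by
    rcases List.mem_cons.1 hi with rfl | h
    · exact Nat.succ_pos _
    · exact p.2.blocks_pos h
  blocks_sum := by
    have := p.2.blocks_sum
    have := p.1.isLt
    simp only [List.length_drop] at *
    simp only [List.sum_cons]
    omega

variable {l}

lemma sum_splitWrtComposition_nil {M : Type*} [AddCommMonoid M] (F : List (List α) → M) :
    ∑ c : Composition ([] : List α).length, F ([].splitWrtComposition c) = F [] := by
  have : Subsingleton (Composition ([] : List α).length) :=
    ⟨fun a b => Composition.ext (by rw [a.blocks_eq_nil.2 rfl, b.blocks_eq_nil.2 rfl])⟩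
  rw [Fintype.sum_subsingleton _ (Composition.ones ([] : List α).length)]
  rfl

lemma compositionCons_bijective (hl : l ≠ []) : Function.Bijective (compositionCons l) := by
  refine ⟨fun ⟨j, d⟩ ⟨j', d'⟩ h => ?_, fun c => ?_⟩
  · have hblocks := congrArg Composition.blocks h
    simp only [compositionCons, List.cons.injEq, add_left_inj] at hblocks
    obtain ⟨hj, hd⟩ := hblocks
    obtain rfl : j = j' := Fin.ext hj
    obtain rfl : d = d' := Composition.ext hd
    rfl
  · obtain ⟨b, t, hc⟩ : ∃ b t, c.blocks = b :: t :=
      List.exists_cons_of_ne_nil (mt c.blocks_eq_nil.1 (by simpa using hl))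
    have hb : 0 < b := c.blocks_pos (by simp [hc])
    have hsum : b + t.sum = l.length := by simpa [hc] using c.blocks_sum
    refine ⟨⟨⟨b - 1, by omega⟩, ⟨t, fun h => c.blocks_pos (by simp [hc, h]), ?_⟩⟩, ?_⟩
    · simp only [List.length_drop]
      omega
    · apply Composition.ext
      simp only [compositionCons, hc, List.cons.injEq, and_true]
      omega

theorem sum_splitWrtComposition_eq_sum_take_cons {M : Type*} [AddCommMonoid M] (hl : l ≠ [])
    (F : List (List α) → M) :
    ∑ c : Composition l.length, F (l.splitWrtComposition c)
      = ∑ j : Fin l.length, ∑ d : Composition (l.drop (j + 1)).length,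
          F (l.take (j + 1) :: (l.drop (j + 1)).splitWrtComposition d) := by
  refine (Fintype.sum_bijective _ (compositionCons_bijective hl)
    (fun p => F (l.take (p.1 + 1) :: (l.drop (p.1 + 1)).splitWrtComposition p.2)) _
    fun p => ?_).symm.trans (Fintype.sum_sigma _)
  simp only [compositionCons, List.splitWrtComposition, List.splitWrtCompositionAux_cons]

end FirstBlock

/-- `(-1)^{ℓ(J)} / π_u(K, J)` for the coarsening `J` of `K` whose blocks are listed by `P`. -/
noncomputable def signedTerm (P : List (List ℕ)) : ℚ := (-1) ^ P.length / ((P.map piu).prod : ℚ)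

noncomputable def signedSum (l : List ℕ) : ℚ :=
  ∑ c : Composition l.length, signedTerm (l.splitWrtComposition c)

noncomputable def signedFpSum (l : List ℕ) : ℚ :=
  ∑ c : Composition l.length,
    (((l.splitWrtComposition c).map List.sum).headI : ℚ) * signedTerm (l.splitWrtComposition c)

lemma signedTerm_cons (A : List ℕ) (P : List (List ℕ)) :
    signedTerm (A :: P) = -(piu A : ℚ)⁻¹ * signedTerm P := by
  simp only [signedTerm, List.length_cons, List.map_cons, List.prod_cons, pow_succ, Nat.cast_mul,
    div_eq_mul_inv, mul_inv]
  ring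

lemma signedSum_eq_sum_take_drop {l : List ℕ} (hl : l ≠ []) :
    signedSum l =
      ∑ j : Fin l.length, -(piu (l.take (j + 1)) : ℚ)⁻¹ * signedSum (l.drop (j + 1)) := by
  simp only [signedSum, sum_splitWrtComposition_eq_sum_take_cons hl, signedTerm_cons, mul_sum]

lemma signedFpSum_eq_sum_take_drop {l : List ℕ} (hl : l ≠ []) :
    signedFpSum l = ∑ j : Fin l.length,
      -(((l.take (j + 1)).sum : ℚ) / piu (l.take (j + 1))) * signedSum (l.drop (j + 1)) := by
  rw [signedFpSum, sum_splitWrtComposition_eq_sum_take_cons hl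
    (fun P => ((P.map List.sum).headI : ℚ) * signedTerm P)]
  refine sum_congr rfl fun j _ => ?_
  simp only [signedSum, mul_sum, List.map_cons, List.headI_cons, signedTerm_cons]
  exact sum_congr rfl fun d _ => by ring

theorem signedSum_eq {l : List ℕ} (hl : ∀ x ∈ l, 0 < x) :
    signedSum l = (-1) ^ l.length / piuAt 0 l.reverse := by
  match l, hl with
  | [], _ =>
    rw [signedSum, sum_splitWrtComposition_nil]
    simp [signedTerm]
  | x :: l, hl =>
    have hl' : ∀ y ∈ l, 0 < y := fun y hy => hl y (List.mem_cons_of_mem x hy)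
    have hx : (0 : ℚ) < x := by exact_mod_cast hl x (by simp)
    have hterm : ∀ j : Fin (x :: l).length,
        -(piu ((x :: l).take (j + 1)) : ℚ)⁻¹ * signedSum ((x :: l).drop (j + 1))
          = -(-1) ^ l.length / x *
              ((-1) ^ (j : ℕ) / (piuAt x (l.take j) * piuAt 0 (l.drop j).reverse)) := by
      intro j
      rw [List.take_succ_cons, List.drop_succ_cons,
        signedSum_eq fun y hy => hl' y (List.mem_of_mem_drop hy), cast_piu, piuAt_cons, zero_add,
        List.length_drop, neg_one_pow_sub_eq_mul (Nat.lt_succ_iff.1 j.isLt)]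
      simp only [div_eq_mul_inv, mul_inv]
      ring
    rw [signedSum_eq_sum_take_drop (List.cons_ne_nil x l), Fintype.sum_congr _ _ hterm, ← mul_sum,
      Fin.sum_univ_eq_sum_range
        (fun j => (-1 : ℚ) ^ j / (piuAt x (l.take j) * piuAt 0 (l.drop j).reverse)) (x :: l).length,
      List.length_cons,
      sum_neg_one_pow_div_piuAt_take_mul_piuAt_drop_reverse hl' hx, piuAt_zero_reverse_cons,
      pow_succ]
    have hR : 0 < piuAt 0 l.reverse := piuAt_pos le_rfl (by simpa using hl')
    have : (0 : ℚ) ≤ l.sum := by positivity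
    field_simp
    ring
termination_by l.length

theorem signedFpSum_eq {l : List ℕ} (hl : ∀ x ∈ l, 0 < x) :
    signedFpSum l = ∑ j ∈ range l.length,
      (-1) ^ (l.length - j) / (piuAt 0 (l.take j) * piuAt 0 (l.drop (j + 1)).reverse) := by
  rcases eq_or_ne l [] with rfl | hne
  · rw [signedFpSum,
      sum_splitWrtComposition_nil fun P : List (List ℕ) =>
        ((P.map List.sum).headI : ℚ) * signedTerm P]
    simp
  rw [signedFpSum_eq_sum_take_drop hne, ← Fin.sum_univ_eq_sum_range]
  refine Fintype.sum_congr _ _ fun j => ?_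
  have hj := j.isLt
  have hxj : (0 : ℚ) < l[(j : ℕ)] := by exact_mod_cast hl _ (List.getElem_mem hj)
  have hA : 0 < piuAt 0 (l.take j) := piuAt_pos le_rfl fun y hy => hl y (List.mem_of_mem_take hy)
  have hB : 0 < piuAt 0 (l.drop (j + 1)).reverse :=
    piuAt_pos le_rfl fun y hy => hl y (List.mem_of_mem_drop (List.mem_reverse.1 hy))
  have hS : (0 : ℚ) ≤ (l.take j).sum := by positivity
  rw [signedSum_eq fun y hy => hl y (List.mem_of_mem_drop hy), List.take_add_one,
    List.getElem?_eq_getElem hj, Option.toList_some, cast_piu, piuAt_append_singleton,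
    List.length_drop, show l.length - j = l.length - (j + 1) + 1 by omega, pow_succ]
  simp only [List.sum_append, List.sum_singleton, Nat.cast_add]
  field_simp
  ring

theorem neg_one_pow_length_mul_signedFpSum {l : List ℕ} (hl : ∀ x ∈ l, 0 < x) :
    (-1) ^ l.length * signedFpSum l = -signedFpSum l.reverse := by
  rw [signedFpSum_eq hl, signedFpSum_eq (by simpa using hl), List.length_reverse, mul_sum,
    ← sum_neg_distrib, ← sum_range_reflect]
  refine sum_congr rfl fun j hj => ?_
  have hj : j < l.length := mem_range.1 hj
  rw [List.take_reverse, List.drop_reverse, show l.length - (l.length - 1 - j) = j + 1 by omega,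
    show l.length - 1 - j + 1 = l.length - j by omega,
    show l.length - 1 - j = l.length - (j + 1) by omega, List.reverse_reverse,
    neg_one_pow_sub_eq_mul hj.le, pow_succ]
  ring

theorem midSum_eq_prod_signedFpSum (L : List (List ℕ)) : midSum L = (L.map signedFpSum).prod := by
  rw [← Fin.prod_univ_fun_getElem, midSum]
  simp only [signedFpSum, Fintype.prod_sum, signedTerm, List.length_splitWrtComposition,
    List.get_eq_getElem]
  refine sum_congr rfl fun g _ => ?_
  rw [prod_mul_distrib, prod_div_distrib, prod_pow_eq_pow_sum]
  ring

theorem stmt12_general (L : List (List ℕ))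
    (hpos : ∀ x ∈ L.flatten, 0 < x) :
    (-1 : ℚ) ^ L.flatten.length * midSum L
      = (-1 : ℚ) ^ L.length * midSum ((L.map List.reverse).reverse) := by
  have hrev : ∀ B ∈ L, (-1) ^ B.length * signedFpSum B = -signedFpSum B.reverse :=
    fun B hB =>
      neg_one_pow_length_mul_signedFpSum fun x hx => hpos x (List.mem_flatten.2 ⟨B, hB, hx⟩)
  rw [midSum_eq_prod_signedFpSum, midSum_eq_prod_signedFpSum, ← prod_map_pow_length,
    ← List.prod_map_mul, List.map_congr_left (g := Neg.neg ∘ signedFpSum ∘ List.reverse) hrev,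
    ← List.map_map, List.prod_map_neg, List.length_map, List.map_reverse, List.prod_reverse,
    List.map_map]

/-- for compositions `K ⪰ I` (with decomposition witness `L`, so
`ℓ(K) = L.flatten.length` and `ℓ(I) = L.length`),
`(-1)^{ℓ(K)} ∑_{K ⪰ J ⪰ I} (-1)^{ℓ(J)} fp(J,I)/π_u(K,J)
  = (-1)^{ℓ(I)} ∑_{K̄ ⪰ J ⪰ Ī} (-1)^{ℓ(J)} fp(J,Ī)/π_u(K̄,J)`,
the reversed refinement `K̄ ⪰ Ī` being witnessed by `(L.map reverse).reverse`. -/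
theorem stmt12 (L : List (List ℕ))
    (hblocks : ∀ B ∈ L, B ≠ []) (hpos : ∀ x ∈ L.flatten, 0 < x) :
    (-1 : ℚ) ^ L.flatten.length * midSum L
      = (-1 : ℚ) ^ L.length * midSum ((L.map List.reverse).reverse) :=
  stmt12_general L hpos
end
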